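/- arXiv:1907.09978 — 3 statements merged into one kernel-verified Lean document; each statement's English description precedes it below -/
import Mathlib

section
/- Let x, y, z be positive reals with x ≤ y ≤ z ≤ 1/2 and x + y + z = 1, and suppose a, b, c, h > 0 satisfy x = a*h/((b*h)*(c*h)), y = b*h/((a*h)*(c*h)), z = c*h/((a*h)*(b*h)). Then a*h ≤ 3. -/
/-!
Multiplying the expressions for `y` and `z` gives `y z = 1 / (a h)²`. The constraints force
`1/3 ≤ z ≤ 1/2` and `y ≥ (1 - z) / 2`, so `y z ≥ z (1 - z) / 2 ≥ 1/9`, whence `(a h)² ≤ 9`.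
-/

lemma sq_mul_div_mul_div_eq_one {A B C : ℝ} (hA : A ≠ 0) (hB : B ≠ 0) (hC : C ≠ 0) :
    A ^ 2 * (B / (A * C) * (C / (A * B))) = 1 := by
  field_simp

lemma one_ninth_le_mul_of_sum_eq_one {x y z : ℝ} (hxy : x ≤ y) (hyz : y ≤ z) (hz : z ≤ 1 / 2)
    (hsum : x + y + z = 1) : 1 / 9 ≤ y * z := by
  have hz_lower : 1 / 3 ≤ z := by linarith
  have hy_lower : (1 - z) / 2 ≤ y := by linarith
  calc 1 / 9 ≤ (1 - z) / 2 * z := by nlinarith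
    _ ≤ y * z := by gcongr

lemma le_three_of_sq_mul_eq_one {A t : ℝ} (ht : 1 / 9 ≤ t) (h : A ^ 2 * t = 1) : A ≤ 3 := by
  nlinarith [sq_nonneg (A - 3)]

theorem stmt_6_general (x y z a b c h : ℝ)
    (hxy : x ≤ y) (hyz : y ≤ z) (hz : z ≤ 1 / 2)
    (hsum : x + y + z = 1)
    (ha : 0 < a) (hb : 0 < b) (hc : 0 < c) (hh : 0 < h)
    (hydef : y = b * h / ((a * h) * (c * h)))
    (hzdef : z = c * h / ((a * h) * (b * h))) :
    a * h ≤ 3 := by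
  have key : (a * h) ^ 2 * (y * z) = 1 := by
    rw [hydef, hzdef]
    exact sq_mul_div_mul_div_eq_one (by positivity) (by positivity) (by positivity)
  exact le_three_of_sq_mul_eq_one (one_ninth_le_mul_of_sum_eq_one hxy hyz hz hsum) key

/-- Systole bound for once-punctured tori: if `0 < x ≤ y ≤ z ≤ 1/2`,
`x + y + z = 1` and `x = a h/((b h)(c h))` etc. for positive `a, b, c, h`,
then `a h ≤ 3`. -/
theorem stmt_6 (x y z a b c h : ℝ)
    (hx : 0 < x) (hxy : x ≤ y) (hyz : y ≤ z) (hz : z ≤ 1 / 2)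
    (hsum : x + y + z = 1)
    (ha : 0 < a) (hb : 0 < b) (hc : 0 < c) (hh : 0 < h)
    (hxdef : x = a * h / ((b * h) * (c * h)))
    (hydef : y = b * h / ((a * h) * (c * h)))
    (hzdef : z = c * h / ((a * h) * (b * h))) :
    a * h ≤ 3 :=
  stmt_6_general x y z a b c h hxy hyz hz hsum ha hb hc hh hydef hzdef
end

section
/- Let ψ be a real-valued function on the oriented edges of the infinite trivalent tree T_∞ satisfying: (i) ψ(e⃗₁) + ψ(e⃗₂) + ψ(e⃗₃) = 1 whenever e⃗₁, e⃗₂, e⃗₃ are the three oriented edges pointing into a common vertex, and (ii) ψ(e⃗) + ψ(-e⃗) = 1 for every edge. Then for every finite subtree T, the sum of ψ(e⃗) over all oriented edges e⃗ with head in T and tail outside T equals 1. -/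
/-!
By the vertex relation each `v ∈ S` contributes `1 - ∑ ψ u v` over its neighbours `u ∈ S`, so the boundary sum is `#S - X`, where `X` is the
sum of `ψ` over the oriented edges inside `S`. Pairing each such edge with its reverse, the edge
relation makes `X` the number of edges of the tree `S`, namely `#S - 1`.
-/

open Finset

namespace SimpleGraph

variable {V : Type*} [DecidableEq V] (G : SimpleGraph V) [G.LocallyFinite]

lemma degree_induce_eq_card_neighborFinset_inter (S : Finset V) (v : (S : Set V))
    [Fintype ((G.induce (S : Set V)).neighborSet v)] :
    (G.induce (S : Set V)).degree v = #(G.neighborFinset v ∩ S) := by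
  rw [← card_neighborFinset_eq_degree]
  refine card_bij (fun u _ ↦ u.1) (fun u hu ↦ ?_) (fun _ _ _ _ ↦ Subtype.ext) (fun u hu ↦ ?_)
  · simpa using And.intro hu u.2
  · simp only [mem_inter, mem_neighborFinset] at hu
    exact ⟨⟨u, hu.2⟩, by simpa using hu.1, rfl⟩

lemma sum_card_neighborFinset_inter_of_isTree (S : Finset V)
    (hS : (G.induce (S : Set V)).IsTree) :
    ∑ v ∈ S, #(G.neighborFinset v ∩ S) + 2 = 2 * #S := by
  classical
  have hdeg := sum_degrees_eq_twice_card_edges (G.induce (S : Set V))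
  have hedges : _ = #S := hS.card_edgeFinset.trans (Fintype.card_coe S)
  simp only [degree_induce_eq_card_neighborFinset_inter] at hdeg
  rw [← sum_attach S, ← hedges]
  exact (congrArg (· + 2) hdeg).trans (by ring)

variable {G}

lemma two_mul_sum_sum_neighborFinset_inter {ψ : V → V → ℝ}
    (hedge : ∀ u v, G.Adj u v → ψ u v + ψ v u = 1) (S : Finset V) :
    2 * ∑ v ∈ S, ∑ u ∈ G.neighborFinset v ∩ S, ψ u v = ∑ v ∈ S, #(G.neighborFinset v ∩ S) := by
  have hswap : ∑ v ∈ S, ∑ u ∈ G.neighborFinset v ∩ S, ψ u v =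
      ∑ v ∈ S, ∑ u ∈ G.neighborFinset v ∩ S, ψ v u :=
    sum_comm' fun v u ↦ by
      simp only [mem_inter, mem_neighborFinset, G.adj_comm v u]
      tauto
  rw [two_mul]
  nth_rw 2 [hswap]
  simp only [← sum_add_distrib, Nat.cast_sum, card_eq_sum_ones, Nat.cast_one]
  refine sum_congr rfl fun v _ ↦ sum_congr rfl fun u hu ↦ hedge u v ?_
  exact G.adj_symm (mem_neighborFinset _ _ _ |>.mp (mem_inter.mp hu).1)

lemma sum_sum_neighborFinset_sdiff {ψ : V → V → ℝ}
    (hvert : ∀ v, ∑ u ∈ G.neighborFinset v, ψ u v = 1) (S : Finset V) :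
    ∑ v ∈ S, ∑ u ∈ G.neighborFinset v \ S, ψ u v =
      #S - ∑ v ∈ S, ∑ u ∈ G.neighborFinset v ∩ S, ψ u v := by
  rw [card_eq_sum_ones, Nat.cast_sum, ← sum_sub_distrib]
  refine sum_congr rfl fun v _ ↦ ?_
  rw [Nat.cast_one, ← hvert v, ← sum_inter_add_sum_sdiff (G.neighborFinset v) S]
  ring

end SimpleGraph

open SimpleGraph in
theorem stmt_7_general {V : Type*} [DecidableEq V] (G : SimpleGraph V) [G.LocallyFinite]
    (htree : G.IsTree)
    (ψ : V → V → ℝ)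
    (hvert : ∀ v : V, ∑ u ∈ G.neighborFinset v, ψ u v = 1)
    (hedge : ∀ u v : V, G.Adj u v → ψ u v + ψ v u = 1)
    (S : Finset V)
    (hconn : (G.induce (S : Set V)).Connected) :
    ∑ v ∈ S, ∑ u ∈ G.neighborFinset v \ S, ψ u v = 1 := by
  have hcount := G.sum_card_neighborFinset_inter_of_isTree S ⟨hconn, htree.isAcyclic.induce _⟩
  have hinner := two_mul_sum_sum_neighborFinset_inter hedge S
  have hcount' : ((∑ v ∈ S, #(G.neighborFinset v ∩ S) : ℕ) : ℝ) + 2 = 2 * #S := by exact_mod_cast hcount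
  rw [sum_sum_neighborFinset_sdiff hvert S]
  linarith

/-- Finite subtree sum: if `ψ` on oriented edges (`ψ u v` = value of the edge
with tail `u`, head `v`) of an infinite trivalent tree satisfies the vertex
relation (the three edges into a vertex sum to 1) and the edge relation
(`ψ(e) + ψ(-e) = 1`), then for any finite (connected, nonempty) subtree `S`,
the sum of `ψ` over the oriented edges with head in `S` and tail outside `S`
equals 1. -/
theorem stmt_7 {V : Type*} [DecidableEq V] (G : SimpleGraph V) [G.LocallyFinite] [Infinite V]
    (htree : G.IsTree) (hdeg : ∀ v : V, G.degree v = 3)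
    (ψ : V → V → ℝ)
    (hvert : ∀ v : V, ∑ u ∈ G.neighborFinset v, ψ u v = 1)
    (hedge : ∀ u v : V, G.Adj u v → ψ u v + ψ v u = 1)
    (S : Finset V) (hS : S.Nonempty)
    (hconn : (G.induce (S : Set V)).Connected) :
    ∑ v ∈ S, ∑ u ∈ G.neighborFinset v \ S, ψ u v = 1 :=
  stmt_7_general G htree ψ hvert hedge S hconn
end

section
/- In a directed graph whose underlying graph is the infinite trivalent tree, suppose every vertex has at most one outgoing edge (i.e., every vertex is a 'sink' with 3 incoming edges or a 'fork' with exactly 2 incoming edges). Then either (1) there is exactly one sink vertex and every edge points toward it along the unique path, or (2) there are no sink vertices. -/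
/-!
If `s` is a sink, induct on the distance to `s`: a vertex `u ≠ s` has a neighbour `p` closer
to `s`; the edge `p → u` would point away from `s`, contradicting the induction hypothesis at `p`, so `u → p` is
the unique outgoing edge of `u`. Hence every edge points towards `s`, and a second sink `s'` is
impossible because the edge between `s'` and its neighbour closer to `s` must leave `s'`.
Without a sink, every vertex has an outgoing edge.
-/

namespace SimpleGraph

variable {V : Type*} {G : SimpleGraph V}

theorem Connected.exists_adj_dist_lt (hG : G.Connected) {u s : V} (hu : u ≠ s) :
    ∃ p, G.Adj u p ∧ G.dist p s < G.dist u s := by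
  obtain ⟨w, hw⟩ := hG.exists_walk_length_eq_dist u s
  cases w with
  | nil => exact absurd rfl hu
  | cons h q =>
    refine ⟨_, h, ?_⟩
    have := dist_le q
    rw [Walk.length_cons] at hw
    omega

section Orientation

variable {D : V → V → Prop}
  (horient : ∀ u v : V, G.Adj u v → (D u v ↔ ¬ D v u))
  (hout : ∀ v u w : V, D v u → D v w → u = w)
include horient hout

theorem Connected.dist_lt_of_orientation_of_sink (hG : G.Connected) {s : V}
    (hs : ∀ u, ¬ D s u) {u v : V} (huv : D u v) : G.dist v s < G.dist u s := by
  induction hn : G.dist u s using Nat.strong_induction_on generalizing u v with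
  | _ n ih =>
    subst hn
    by_contra! hge
    have hu : u ≠ s := by
      rintro rfl
      exact hs v huv
    obtain ⟨p, hup, hp⟩ := hG.exists_adj_dist_lt hu
    have hpv : p ≠ v := by
      rintro rfl
      omega
    have hpu : D p u := by
      by_contra h
      exact hpv (hout u p v ((horient u p hup).mpr h) huv)
    have := ih _ hp hpu rfl
    omega

theorem Connected.eq_of_orientation_of_sinks (hG : G.Connected) {s s' : V}
    (hs : ∀ u, ¬ D s u) (hs' : ∀ u, ¬ D s' u) : s' = s := by
  by_contra hne
  obtain ⟨p, hp, hlt⟩ := hG.exists_adj_dist_lt hne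
  have hps' : D p s' := by
    by_contra h
    exact hs' p ((horient s' p hp).mpr h)
  have := hG.dist_lt_of_orientation_of_sink horient hout hs hps'
  omega

end Orientation

end SimpleGraph

theorem stmt_16_general {V : Type*} (G : SimpleGraph V)
    (htree : G.IsTree)
    (D : V → V → Prop)
    (horient : ∀ u v : V, G.Adj u v → (D u v ↔ ¬ D v u))
    (hout : ∀ v u w : V, D v u → D v w → u = w) :
    (∃ s : V, (∀ u : V, ¬ D s u) ∧
      (∀ s' : V, (∀ u : V, ¬ D s' u) → s' = s) ∧
      (∀ u v : V, D u v → G.dist v s < G.dist u s)) ∨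
    (∀ v : V, ∃ u : V, D v u) := by
  by_cases hsink : ∃ s : V, ∀ u : V, ¬ D s u
  · obtain ⟨s, hs⟩ := hsink
    have hG := htree.connected
    exact Or.inl ⟨s, hs, fun _ hs' => hG.eq_of_orientation_of_sinks horient hout hs hs',
      fun _ _ huv => hG.dist_lt_of_orientation_of_sink horient hout hs huv⟩
  · push Not at hsink
    exact Or.inr hsink

/-- Sink/fork dichotomy on the oriented trivalent tree: if the edges of an
infinite trivalent tree are oriented (`D u v` = edge directed from `u` to `v`)
so that every vertex has at most one outgoing edge, then either there is a
unique sink towards which every edge points (each directed edge decreases the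
distance to the sink), or there are no sinks at all. -/
theorem stmt_16 {V : Type*} (G : SimpleGraph V) [G.LocallyFinite] [Infinite V]
    (htree : G.IsTree) (hdeg : ∀ v : V, G.degree v = 3)
    (D : V → V → Prop)
    (hDadj : ∀ u v : V, D u v → G.Adj u v)
    (horient : ∀ u v : V, G.Adj u v → (D u v ↔ ¬ D v u))
    (hout : ∀ v u w : V, D v u → D v w → u = w) :
    (∃ s : V, (∀ u : V, ¬ D s u) ∧
      (∀ s' : V, (∀ u : V, ¬ D s' u) → s' = s) ∧
      (∀ u v : V, D u v → G.dist v s < G.dist u s)) ∨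
    (∀ v : V, ∃ u : V, D v u) :=
  stmt_16_general G htree D horient hout
end
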